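/- arXiv:2311.11936 — 6 statements merged into one kernel-verified Lean document; each statement's English description precedes it below -/
import Mathlib

section
/- Let G be a monoidal category, X a category, T : G ⥤ (X ⥤ X) a monoidal functor into the monoidal category of endofunctors of X (tensor product given by composition of functors), and W a monoidal weight on G. Then the G-interleaving distance d_T is an extended pseudometric on the objects of X: d_T(X₀,X₀) = 0 for every object X₀ of X, d_T(X₀,Y₀) = d_T(Y₀,X₀) for all objects X₀,Y₀, and d_T(X₀,Z₀) ≤ d_T(X₀,Y₀) + d_T(Y₀,Z₀) for all objects X₀,Y₀,Z₀. -/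
open CategoryTheory MonoidalCategory Functor.LaxMonoidal Functor.OplaxMonoidal
open scoped ENNReal

attribute [local instance] CategoryTheory.endofunctorMonoidalCategory

section Defs

variable {G : Type*} [Category G] [MonoidalCategory G]
variable {X : Type*} [Category X]

/-- Objects `X₀`, `Y₀` of `X` are `(g,h)`-interleaved with respect to a monoidal functor
`T : G ⥤ (X ⥤ X)` into the monoidal category of endofunctors of `X` (tensor given by
composition of functors).

Note: Mathlib's tensor product on endofunctors is `F ⊗ G = F ⋙ G` (first `F`, then `G`), so
`T.obj (h ⊗ g)` corresponds, via the structure isomorphisms of `T`, to the composite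
endofunctor `Z ↦ (T.obj g).obj ((T.obj h).obj Z)`; this is the mirror image of the convention
`T_{g ⊗ h} = T_g ∘ T_h` used in the paper. -/
def Interleaved (T : G ⥤ (X ⥤ X)) [T.Monoidal] (g h : G) (X₀ Y₀ : X) : Prop :=
  ∃ (φ : X₀ ⟶ (T.obj g).obj Y₀) (ψ : Y₀ ⟶ (T.obj h).obj X₀)
    (α : 𝟙_ G ⟶ g ⊗ h) (β : 𝟙_ G ⟶ h ⊗ g),
    φ ≫ (T.obj g).map ψ = (ε T).app X₀ ≫ (T.map β).app X₀ ≫ (δ T h g).app X₀ ∧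
    ψ ≫ (T.obj h).map φ = (ε T).app Y₀ ≫ (T.map α).app Y₀ ≫ (δ T g h).app Y₀

/-- The `G`-interleaving distance on the objects of `X` determined by a monoidal functor
`T : G ⥤ (X ⥤ X)` and a monoidal weight `W` on `G`. -/
noncomputable def interleavingDist (T : G ⥤ (X ⥤ X)) [T.Monoidal] (W : G → ℝ≥0∞)
    (X₀ Y₀ : X) : ℝ≥0∞ :=
  sInf {e | ∃ g h : G, Interleaved T g h X₀ Y₀ ∧ e = max (W g) (W h)}

end Defs

section Aux

variable {G : Type*} [Category G] [MonoidalCategory G]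
variable {X : Type*} [Category X]
variable (T : G ⥤ (X ⥤ X)) [T.Monoidal]

/-- Composition of `T`-shifted morphisms. -/
def istar {g h : G} {A B C : X} (u : A ⟶ (T.obj g).obj B) (v : B ⟶ (T.obj h).obj C) :
    A ⟶ (T.obj (h ⊗ g)).obj C :=
  u ≫ (T.obj g).map v ≫ (μ T h g).app C

/-- The `T`-shifted morphism induced by a morphism out of the unit in `G`. -/
def ipure {k : G} (w : 𝟙_ G ⟶ k) (A : X) : A ⟶ (T.obj k).obj A :=
  (ε T).app A ≫ (T.map w).app A

lemma ipure_comp {k k' : G} (w : 𝟙_ G ⟶ k) (f : k ⟶ k') (A : X) :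
    ipure T (w ≫ f) A = ipure T w A ≫ (T.map f).app A := by
  simp [ipure, T.map_comp]

lemma istar_eq_iff {g h : G} {X₀ Y₀ : X} (φ : X₀ ⟶ (T.obj g).obj Y₀)
    (ψ : Y₀ ⟶ (T.obj h).obj X₀) (β : 𝟙_ G ⟶ h ⊗ g) :
    istar T φ ψ = ipure T β X₀ ↔
    φ ≫ (T.obj g).map ψ = (ε T).app X₀ ≫ (T.map β).app X₀ ≫ (δ T h g).app X₀ := by
  unfold istar ipure
  constructor
  · intro H
    have := congrArg (· ≫ (δ T h g).app X₀) H
    simpa using this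
  · intro H
    rw [← Category.assoc, H]
    simp

lemma interleaved_iff (g h : G) (X₀ Y₀ : X) :
    Interleaved T g h X₀ Y₀ ↔
    ∃ (φ : X₀ ⟶ (T.obj g).obj Y₀) (ψ : Y₀ ⟶ (T.obj h).obj X₀)
      (α : 𝟙_ G ⟶ g ⊗ h) (β : 𝟙_ G ⟶ h ⊗ g),
      istar T φ ψ = ipure T β X₀ ∧ istar T ψ φ = ipure T α Y₀ := by
  unfold Interleaved
  simp only [istar_eq_iff]

lemma istar_assoc {g h k : G} {A B C D : X} (u : A ⟶ (T.obj g).obj B)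
    (v : B ⟶ (T.obj h).obj C) (w : C ⟶ (T.obj k).obj D) :
    istar T u (istar T v w) ≫ (T.map (α_ k h g).hom).app D = istar T (istar T u v) w := by
  unfold istar
  simp only [Functor.map_comp, Category.assoc]
  rw [associativity_app]
  rw [μ_naturality_assoc]

lemma istar_ipure {g k : G} {A B : X} (u : A ⟶ (T.obj g).obj B) (w : 𝟙_ G ⟶ k) :
    istar T u (ipure T w B) = u ≫ (T.map ((λ_ g).inv ≫ w ▷ g)).app B := by
  unfold istar ipure
  simp

lemma ipure_istar {g k : G} {A B : X} (u : A ⟶ (T.obj g).obj B) (w : 𝟙_ G ⟶ k) :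
    istar T (ipure T w A) u = u ≫ (T.map ((ρ_ g).inv ≫ g ◁ w)).app B := by
  unfold istar ipure
  rw [Category.assoc, ← NatTrans.naturality_assoc (T.map w) u]
  simp

lemma istar_map_right {g h h' : G} {A B C : X} (u : A ⟶ (T.obj g).obj B)
    (v : B ⟶ (T.obj h).obj C) (f : h ⟶ h') :
    istar T u (v ≫ (T.map f).app C) = istar T u v ≫ (T.map (f ▷ g)).app C := by
  unfold istar
  simp

lemma istar_key {a b c d : G} {A B C : X}
    (u₁ : A ⟶ (T.obj a).obj B) (u₂ : B ⟶ (T.obj b).obj C)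
    (v₂ : C ⟶ (T.obj c).obj B) (v₁ : B ⟶ (T.obj d).obj A)
    (p : 𝟙_ G ⟶ c ⊗ b) (q : 𝟙_ G ⟶ d ⊗ a)
    (h₂ : istar T u₂ v₂ = ipure T p B) (h₁ : istar T u₁ v₁ = ipure T q A) :
    istar T (istar T u₁ u₂) (istar T v₂ v₁) =
      ipure T (q ≫ (((ρ_ d).inv ≫ d ◁ p ≫ (α_ d c b).inv) ▷ a) ≫ (α_ (d ⊗ c) b a).hom) A := by
  have e2 : istar T u₂ (istar T v₂ v₁) =
      v₁ ≫ (T.map ((ρ_ d).inv ≫ d ◁ p ≫ (α_ d c b).inv)).app A := by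
    have e1 := istar_assoc T u₂ v₂ v₁
    rw [h₂, ipure_istar] at e1
    have := congrArg (· ≫ (T.map (α_ d c b).inv).app A) e1
    simp only [Category.assoc, ← NatTrans.comp_app, ← T.map_comp, Iso.hom_inv_id,
      T.map_id, NatTrans.id_app, Category.comp_id] at this
    simpa [T.map_comp] using this
  rw [← istar_assoc T u₁ u₂ (istar T v₂ v₁), e2, istar_map_right, h₁, ← ipure_comp,
    ← ipure_comp]
  simp

lemma interleaved_refl (X₀ : X) : Interleaved T (𝟙_ G) (𝟙_ G) X₀ X₀ := by
  rw [interleaved_iff]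
  refine ⟨ipure T (𝟙 _) X₀, ipure T (𝟙 _) X₀, (λ_ (𝟙_ G)).inv, (λ_ (𝟙_ G)).inv, ?_, ?_⟩ <;>
  · rw [istar_ipure, ← ipure_comp]
    congr 1
    simp

lemma interleaved_symm {g h : G} {X₀ Y₀ : X} (hI : Interleaved T g h X₀ Y₀) :
    Interleaved T h g Y₀ X₀ := by
  obtain ⟨φ, ψ, α, β, h1, h2⟩ := hI
  exact ⟨ψ, φ, β, α, h2, h1⟩

lemma interleaved_trans {g h g' h' : G} {X₀ Y₀ Z₀ : X}
    (hI : Interleaved T g h X₀ Y₀) (hJ : Interleaved T g' h' Y₀ Z₀) :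
    Interleaved T (g' ⊗ g) (h ⊗ h') X₀ Z₀ := by
  rw [interleaved_iff] at hI hJ ⊢
  obtain ⟨φ₁, ψ₁, α₁, β₁, e1, e2⟩ := hI
  obtain ⟨φ₂, ψ₂, α₂, β₂, f1, f2⟩ := hJ
  exact ⟨istar T φ₁ φ₂, istar T ψ₂ ψ₁, _, _,
    istar_key T φ₁ φ₂ ψ₂ ψ₁ β₂ β₁ f1 e1,
    istar_key T ψ₂ ψ₁ φ₁ φ₂ α₁ α₂ e2 f2⟩

end Aux

/-- For a monoidal functor `T : G ⥤ (X ⥤ X)` and a monoidal weight `W` on `G`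
(`W (𝟙_ G) = 0` and `W (g ⊗ h) ≤ W g + W h`), the `G`-interleaving distance is an extended
pseudometric on the objects of `X`. -/
theorem stmt_0 {G : Type*} [Category G] [MonoidalCategory G] {X : Type*} [Category X]
    (T : G ⥤ (X ⥤ X)) [T.Monoidal] (W : G → ℝ≥0∞)
    (hW_unit : W (𝟙_ G) = 0) (hW_tensor : ∀ g h : G, W (g ⊗ h) ≤ W g + W h) :
    (∀ X₀ : X, interleavingDist T W X₀ X₀ = 0) ∧
    (∀ X₀ Y₀ : X, interleavingDist T W X₀ Y₀ = interleavingDist T W Y₀ X₀) ∧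
    (∀ X₀ Y₀ Z₀ : X, interleavingDist T W X₀ Z₀ ≤
      interleavingDist T W X₀ Y₀ + interleavingDist T W Y₀ Z₀) := by
  refine ⟨fun X₀ => ?_, fun X₀ Y₀ => ?_, fun X₀ Y₀ Z₀ => ?_⟩
  · refine le_antisymm ?_ zero_le
    have hm : max (W (𝟙_ G)) (W (𝟙_ G)) ∈
        {e | ∃ g h : G, Interleaved T g h X₀ X₀ ∧ e = max (W g) (W h)} :=
      ⟨𝟙_ G, 𝟙_ G, interleaved_refl T X₀, rfl⟩
    have := sInf_le hm
    simpa [hW_unit, interleavingDist] using this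
  · unfold interleavingDist
    congr 1
    ext e
    constructor
    · rintro ⟨g, h, hI, rfl⟩
      exact ⟨h, g, interleaved_symm T hI, (max_comm _ _)⟩
    · rintro ⟨g, h, hI, rfl⟩
      exact ⟨h, g, interleaved_symm T hI, (max_comm _ _)⟩
  · have key : ∀ e₁ ∈ {e | ∃ g h : G, Interleaved T g h X₀ Y₀ ∧ e = max (W g) (W h)},
        ∀ e₂ ∈ {e | ∃ g h : G, Interleaved T g h Y₀ Z₀ ∧ e = max (W g) (W h)},
        interleavingDist T W X₀ Z₀ ≤ e₁ + e₂ := by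
      rintro e₁ ⟨g, h, hI, rfl⟩ e₂ ⟨g', h', hJ, rfl⟩
      refine le_trans (sInf_le ⟨g' ⊗ g, h ⊗ h', interleaved_trans T hI hJ, rfl⟩) ?_
      refine max_le ?_ ?_
      · refine le_trans (hW_tensor g' g) ?_
        rw [add_comm]
        exact add_le_add (le_max_left _ _) (le_max_left _ _)
      · refine le_trans (hW_tensor h h') ?_
        exact add_le_add (le_max_right _ _) (le_max_right _ _)
    rw [show interleavingDist T W X₀ Y₀ =
        sInf {e | ∃ g h : G, Interleaved T g h X₀ Y₀ ∧ e = max (W g) (W h)} from rfl,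
      show interleavingDist T W Y₀ Z₀ =
        sInf {e | ∃ g h : G, Interleaved T g h Y₀ Z₀ ∧ e = max (W g) (W h)} from rfl,
      sInf_eq_iInf', sInf_eq_iInf', ENNReal.iInf_add]
    refine le_iInf fun i => ?_
    rw [ENNReal.add_iInf]
    exact le_iInf fun j => key i i.2 j j.2
end

section
/- Let X and Y be nonempty metric spaces. Define, for functions f : X → Y and g : Y → X, the quantities (in ℝ≥0∞): dis(f) := ⨆_{x,x'} ENNReal.ofReal |dist(x,x') − dist(f(x),f(x'))|, dis(g) := ⨆_{y,y'} ENNReal.ofReal |dist(y,y') − dist(g(y),g(y'))|, codis(f,g) := ⨆_{x,y} ENNReal.ofReal |dist(x, g(y)) − dist(f(x), y)|, and the altered codistortion acodis(f,g) := max( ⨆_x edist(x, g(f(x))), ⨆_y edist(y, f(g(y))) ). Define d_GH := (1/2) · ⨅_{f,g} max(dis(f), dis(g), codis(f,g)) and d̃_GH := (1/2) · ⨅_{f,g} max(dis(f), dis(g), acodis(f,g)), infima over all (not necessarily continuous) functions f : X → Y and g : Y → X. Then d̃_GH ≤ d_GH and d_GH ≤ 2 · d̃_GH. -/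
open scoped ENNReal

/-- The distortion of a map between metric spaces, valued in `ℝ≥0∞`. -/
noncomputable def distortion {X Y : Type*} [MetricSpace X] [MetricSpace Y] (f : X → Y) : ℝ≥0∞ :=
  ⨆ (x : X) (x' : X), ENNReal.ofReal |dist x x' - dist (f x) (f x')|

/-- The codistortion of a pair of maps between metric spaces, valued in `ℝ≥0∞`. -/
noncomputable def codistortion {X Y : Type*} [MetricSpace X] [MetricSpace Y]
    (f : X → Y) (g : Y → X) : ℝ≥0∞ :=
  ⨆ (x : X) (y : Y), ENNReal.ofReal |dist x (g y) - dist (f x) y|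

/-- The altered codistortion of a pair of maps between metric spaces. -/
noncomputable def alteredCodistortion {X Y : Type*} [MetricSpace X] [MetricSpace Y]
    (f : X → Y) (g : Y → X) : ℝ≥0∞ :=
  max (⨆ x : X, edist x (g (f x))) (⨆ y : Y, edist y (f (g y)))

/-- The distortion/codistortion formulation of the Gromov–Hausdorff distance. -/
noncomputable def gromovHausdorff (X Y : Type*) [MetricSpace X] [MetricSpace Y] : ℝ≥0∞ :=
  (1 / 2 : ℝ≥0∞) *
    ⨅ (f : X → Y) (g : Y → X), max (max (distortion f) (distortion g)) (codistortion f g)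

/-- The altered Gromov–Hausdorff distance. -/
noncomputable def alteredGromovHausdorff (X Y : Type*) [MetricSpace X] [MetricSpace Y] : ℝ≥0∞ :=
  (1 / 2 : ℝ≥0∞) *
    ⨅ (f : X → Y) (g : Y → X), max (max (distortion f) (distortion g)) (alteredCodistortion f g)

lemma acodis_le_codis {X Y : Type*} [MetricSpace X] [MetricSpace Y]
    (f : X → Y) (g : Y → X) : alteredCodistortion f g ≤ codistortion f g := by
  apply max_le
  · refine iSup_le fun x => ?_
    have : edist x (g (f x)) = ENNReal.ofReal |dist x (g (f x)) - dist (f x) (f x)| := by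
      rw [dist_self, sub_zero, abs_of_nonneg dist_nonneg, edist_dist]
    rw [this]
    exact le_iSup₂ (f := fun x y => ENNReal.ofReal |dist x (g y) - dist (f x) y|) x (f x)
  · refine iSup_le fun y => ?_
    have : edist y (f (g y)) = ENNReal.ofReal |dist (g y) (g y) - dist (f (g y)) y| := by
      rw [dist_self, zero_sub, abs_neg, abs_of_nonneg dist_nonneg, edist_dist, dist_comm]
    rw [this]
    exact le_iSup₂ (f := fun x y' => ENNReal.ofReal |dist x (g y') - dist (f x) y'|) (g y) y

lemma codis_le_two_mul {X Y : Type*} [MetricSpace X] [MetricSpace Y]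
    (f : X → Y) (g : Y → X) :
    codistortion f g ≤ 2 * max (max (distortion f) (distortion g)) (alteredCodistortion f g) := by
  set M := max (max (distortion f) (distortion g)) (alteredCodistortion f g) with hM
  rcases eq_or_ne M ⊤ with h | h
  · rw [h, ENNReal.mul_top (by norm_num)]; exact le_top
  have hdf : distortion f ≠ ⊤ := ne_top_of_le_ne_top h (le_max_of_le_left (le_max_left _ _))
  have hdg : distortion g ≠ ⊤ := ne_top_of_le_ne_top h (le_max_of_le_left (le_max_right _ _))
  have hac : alteredCodistortion f g ≠ ⊤ := ne_top_of_le_ne_top h (le_max_right _ _)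
  set A := (distortion f).toReal
  set B := (distortion g).toReal
  set C := (alteredCodistortion f g).toReal
  have hA : ∀ x x' : X, |dist x x' - dist (f x) (f x')| ≤ A := by
    intro x x'
    refine (ENNReal.ofReal_le_iff_le_toReal hdf).1 ?_
    exact le_iSup₂ (f := fun x x' => ENNReal.ofReal |dist x x' - dist (f x) (f x')|) x x'
  have hB : ∀ y y' : Y, |dist y y' - dist (g y) (g y')| ≤ B := by
    intro y y'
    refine (ENNReal.ofReal_le_iff_le_toReal hdg).1 ?_
    exact le_iSup₂ (f := fun y y' => ENNReal.ofReal |dist y y' - dist (g y) (g y')|) y y'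
  have hC1 : ∀ x : X, dist x (g (f x)) ≤ C := by
    intro x
    refine (ENNReal.ofReal_le_iff_le_toReal hac).1 ?_
    rw [← edist_dist]
    exact le_trans (le_iSup (fun x => edist x (g (f x))) x) (le_max_left _ _)
  have hC2 : ∀ y : Y, dist y (f (g y)) ≤ C := by
    intro y
    refine (ENNReal.ofReal_le_iff_le_toReal hac).1 ?_
    rw [← edist_dist]
    exact le_trans (le_iSup (fun y => edist y (f (g y))) y) (le_max_right _ _)
  refine iSup₂_le fun x y => ?_
  have key : |dist x (g y) - dist (f x) y| ≤ max A B + C := by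
    rw [abs_sub_le_iff]
    constructor
    · -- dist x (g y) ≤ C + (dist (f x) y + B)
      have h1 : dist x (g y) ≤ dist x (g (f x)) + dist (g (f x)) (g y) := dist_triangle _ _ _
      have h2 : dist (g (f x)) (g y) ≤ dist (f x) y + B := by
        have := (abs_le.1 (hB (f x) y)).1
        linarith
      have := hC1 x
      have hBm : B ≤ max A B := le_max_right _ _
      linarith
    · have h1 : dist (f x) y ≤ dist (f x) (f (g y)) + dist (f (g y)) y := dist_triangle _ _ _
      have h2 : dist (f x) (f (g y)) ≤ dist x (g y) + A := by
        have := (abs_le.1 (hA x (g y))).1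
        linarith
      have h3 : dist (f (g y)) y ≤ C := by rw [dist_comm]; exact hC2 y
      have hAm : A ≤ max A B := le_max_left _ _
      linarith
  calc ENNReal.ofReal |dist x (g y) - dist (f x) y| ≤ ENNReal.ofReal (max A B + C) :=
        ENNReal.ofReal_le_ofReal key
    _ ≤ ENNReal.ofReal (max A B) + ENNReal.ofReal C := ENNReal.ofReal_add_le
    _ ≤ M + M := by
        gcongr
        · have : ENNReal.ofReal (max A B) ≤ max (distortion f) (distortion g) := by
            rcases max_cases A B with ⟨hm, _⟩ | ⟨hm, _⟩
            · rw [hm, ENNReal.ofReal_toReal hdf]; exact le_max_left _ _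
            · rw [hm, ENNReal.ofReal_toReal hdg]; exact le_max_right _ _
          exact this.trans (le_max_left _ _)
        · rw [ENNReal.ofReal_toReal hac]; exact le_max_right _ _
    _ = 2 * M := (two_mul M).symm


/-- For nonempty metric spaces `X`, `Y` the altered Gromov–Hausdorff distance
is bi-Lipschitz equivalent to the Gromov–Hausdorff distance:
`d̃_GH ≤ d_GH` and `d_GH ≤ 2 * d̃_GH`. -/
theorem stmt_8 (X Y : Type*) [MetricSpace X] [MetricSpace Y] [Nonempty X] [Nonempty Y] :
    alteredGromovHausdorff X Y ≤ gromovHausdorff X Y ∧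
      gromovHausdorff X Y ≤ 2 * alteredGromovHausdorff X Y := by
  constructor
  · unfold alteredGromovHausdorff gromovHausdorff
    refine mul_le_mul_right ?_ (1 / 2 : ℝ≥0∞)
    refine le_iInf fun f => le_iInf fun g => ?_
    refine le_trans (iInf_le_of_le f (iInf_le_of_le g le_rfl)) ?_
    exact max_le_max le_rfl (acodis_le_codis f g)
  · unfold gromovHausdorff alteredGromovHausdorff
    rw [← mul_assoc]
    have h2 : (2 : ℝ≥0∞) * (1 / 2) = 1 := by
      rw [one_div, ENNReal.mul_inv_cancel two_ne_zero ENNReal.ofNat_ne_top]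
    rw [h2, one_mul]
    set I := ⨅ (f : X → Y) (g : Y → X),
        max (max (distortion f) (distortion g)) (codistortion f g) with hI
    refine le_iInf₂ fun f g => ?_
    set N := max (max (distortion f) (distortion g)) (alteredCodistortion f g) with hN
    have step : I ≤ 2 * N := by
      refine le_trans (iInf_le_of_le f (iInf_le_of_le g le_rfl)) (max_le ?_ (codis_le_two_mul f g))
      exact le_trans (le_max_left _ _) (le_mul_of_one_le_left zero_le one_le_two)
    have h3 : (1 / 2 : ℝ≥0∞) * (2 * N) = N := by
      rw [← mul_assoc, one_div, ENNReal.inv_mul_cancel two_ne_zero ENNReal.ofNat_ne_top, one_mul]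
    exact h3 ▸ mul_le_mul_right step (1 / 2 : ℝ≥0∞)
end

section
/- Let G and G' be monoidal categories with monoidal weights W and W', let X and X' be categories, and let T : G ⥤ (X ⥤ X) and T' : G' ⥤ (X' ⥤ X') be strict monoidal functors into the respective endofunctor monoidal categories, meaning T(unit) = 𝟭_X and T(g ⊗ h) equals the composite endofunctor Z ↦ T(g)(T(h)(Z)) with the monoidal structure isomorphisms the canonical ones induced by these equalities, and similarly for T'. Let H : G ⥤ G' be a strict monoidal functor with W'(H(g)) ≤ W(g) for every object g of G, and let K : X ⥤ X' be a functor such that for every object g of G, the composite functor T(g) followed by K equals K followed by T'(H(g)) (equality of functors), and such that for every morphism α : g ⟶ h in G and every object X₀ of X, K applied to the component of T(α) at X₀ equals, modulo the above equalities of functors (via eqToHom), the component of T'(H(α)) at K(X₀). Then for all objects X₀, Y₀ of X: d_{T',W'}(K(X₀), K(Y₀)) ≤ d_{T,W}(X₀, Y₀). -/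
/-!
Applying `K` to a `(g, h)`-interleaving `(φ, ψ, α, β)` of `X₀, Y₀` gives a
`(H g, H h)`-interleaving `(K φ, K ψ, H α, H β)` of `K X₀, K Y₀`: since the structure maps of `T` and
`T'` are `eqToHom`s and `H` preserves unit and tensor on objects, each interleaving triangle for
`T'` is the image under `K` of the corresponding triangle for `T`, by the two equivariance
hypotheses on `K`.
As `W' ∘ H ≤ W`, every value in the infimum defining `d_T` bounds `d_{T'}` from above.
-/

open CategoryTheory MonoidalCategory Functor.LaxMonoidal Functor.OplaxMonoidal
open scoped ENNReal

attribute [local instance] CategoryTheory.endofunctorMonoidalCategory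

namespace CategoryTheory.Functor.Monoidal

variable {C D : Type*} [Category C] [MonoidalCategory C] [Category D] [MonoidalCategory D]

theorem δ_eq_eqToHom_of_μ_eq_eqToHom (F : C ⥤ D) [F.Monoidal] {c c' : C}
    (e : F.obj (c ⊗ c') = F.obj c ⊗ F.obj c') (hμ : μ F c c' = eqToHom e.symm) :
    δ F c c' = eqToHom e := by
  rw [← cancel_epi (μ F c c'), μ_δ, hμ, eqToHom_trans, eqToHom_refl]

end CategoryTheory.Functor.Monoidal

theorem interleavingDist_le_of_forall_interleaved {G G' X X' : Type*} [Category G]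
    [MonoidalCategory G] [Category G'] [MonoidalCategory G'] [Category X] [Category X']
    {T : G ⥤ (X ⥤ X)} [T.Monoidal] {T' : G' ⥤ (X' ⥤ X')} [T'.Monoidal]
    {W : G → ℝ≥0∞} {W' : G' → ℝ≥0∞} (f : G → G') (hf : ∀ g, W' (f g) ≤ W g)
    {X₀ Y₀ : X} {X₁ Y₁ : X'}
    (hint : ∀ g h, Interleaved T g h X₀ Y₀ → Interleaved T' (f g) (f h) X₁ Y₁) :
    interleavingDist T' W' X₁ Y₁ ≤ interleavingDist T W X₀ Y₀ := by
  refine le_sInf ?_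
  rintro _ ⟨g, h, hgh, rfl⟩
  exact le_trans (sInf_le ⟨f g, f h, hint g h hgh, rfl⟩) (max_le_max (hf g) (hf h))

section Transport

variable {G G' X X' : Type*} [Category G] [MonoidalCategory G] [Category G'] [MonoidalCategory G']
  [Category X] [Category X']
  {T : G ⥤ (X ⥤ X)} [T.Monoidal] {T' : G' ⥤ (X' ⥤ X')} [T'.Monoidal] {H : G ⥤ G'} {K : X ⥤ X'}

theorem map_interleaving_triangle
    (hT_unit : T.obj (𝟙_ G) = 𝟭 X) (hT_ε : ε T = eqToHom hT_unit.symm)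
    (hT_tensor : ∀ g h : G, T.obj (g ⊗ h) = T.obj g ⊗ T.obj h)
    (hT_δ : ∀ g h : G, δ T g h = eqToHom (hT_tensor g h))
    (hT'_unit : T'.obj (𝟙_ G') = 𝟭 X') (hT'_ε : ε T' = eqToHom hT'_unit.symm)
    (hT'_tensor : ∀ g h : G', T'.obj (g ⊗ h) = T'.obj g ⊗ T'.obj h)
    (hT'_δ : ∀ g h : G', δ T' g h = eqToHom (hT'_tensor g h))
    (hH_unit : H.obj (𝟙_ G) = 𝟙_ G')
    (hH_tensor : ∀ g h : G, H.obj (g ⊗ h) = H.obj g ⊗ H.obj h)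
    (hK : ∀ g : G, T.obj g ⋙ K = K ⋙ T'.obj (H.obj g))
    (hK_map : ∀ {g h : G} (α : g ⟶ h) (X₀ : X),
      K.map ((T.map α).app X₀) =
        eqToHom (Functor.congr_obj (hK g) X₀) ≫ (T'.map (H.map α)).app (K.obj X₀) ≫
          eqToHom (Functor.congr_obj (hK h) X₀).symm)
    {g h : G} {X₀ Y₀ : X} (φ : X₀ ⟶ (T.obj g).obj Y₀) (ψ : Y₀ ⟶ (T.obj h).obj X₀)
    (β : 𝟙_ G ⟶ h ⊗ g)
    (hφψ : φ ≫ (T.obj g).map ψ = (ε T).app X₀ ≫ (T.map β).app X₀ ≫ (δ T h g).app X₀) :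
    (K.map φ ≫ eqToHom (Functor.congr_obj (hK g) Y₀)) ≫
        (T'.obj (H.obj g)).map (K.map ψ ≫ eqToHom (Functor.congr_obj (hK h) X₀)) =
      (ε T').app (K.obj X₀) ≫
        (T'.map (eqToHom hH_unit.symm ≫ H.map β ≫ eqToHom (hH_tensor h g))).app (K.obj X₀) ≫
          (δ T' (H.obj h) (H.obj g)).app (K.obj X₀) := by
  have hKψ : (T'.obj (H.obj g)).map (K.map ψ) = eqToHom _ ≫ K.map ((T.obj g).map ψ) ≫ eqToHom _ :=
    Functor.congr_hom (hK g).symm ψ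
  rw [Functor.map_comp, hKψ]
  simp only [Category.assoc, eqToHom_trans_assoc, eqToHom_refl, Category.id_comp]
  rw [← K.map_comp_assoc, hφψ]
  simp [hT_ε, hT_δ, hT'_ε, hT'_δ, eqToHom_app, eqToHom_map, hK_map]

theorem Interleaved.map
    (hT_unit : T.obj (𝟙_ G) = 𝟭 X) (hT_ε : ε T = eqToHom hT_unit.symm)
    (hT_tensor : ∀ g h : G, T.obj (g ⊗ h) = T.obj g ⊗ T.obj h)
    (hT_δ : ∀ g h : G, δ T g h = eqToHom (hT_tensor g h))
    (hT'_unit : T'.obj (𝟙_ G') = 𝟭 X') (hT'_ε : ε T' = eqToHom hT'_unit.symm)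
    (hT'_tensor : ∀ g h : G', T'.obj (g ⊗ h) = T'.obj g ⊗ T'.obj h)
    (hT'_δ : ∀ g h : G', δ T' g h = eqToHom (hT'_tensor g h))
    (hH_unit : H.obj (𝟙_ G) = 𝟙_ G')
    (hH_tensor : ∀ g h : G, H.obj (g ⊗ h) = H.obj g ⊗ H.obj h)
    (hK : ∀ g : G, T.obj g ⋙ K = K ⋙ T'.obj (H.obj g))
    (hK_map : ∀ {g h : G} (α : g ⟶ h) (X₀ : X),
      K.map ((T.map α).app X₀) =
        eqToHom (Functor.congr_obj (hK g) X₀) ≫ (T'.map (H.map α)).app (K.obj X₀) ≫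
          eqToHom (Functor.congr_obj (hK h) X₀).symm)
    {g h : G} {X₀ Y₀ : X} (hint : Interleaved T g h X₀ Y₀) :
    Interleaved T' (H.obj g) (H.obj h) (K.obj X₀) (K.obj Y₀) := by
  obtain ⟨φ, ψ, α, β, hφψ, hψφ⟩ := hint
  unfold Interleaved
  exact ⟨_, _, _, _,
    map_interleaving_triangle hT_unit hT_ε hT_tensor hT_δ hT'_unit hT'_ε hT'_tensor hT'_δ
      hH_unit hH_tensor hK hK_map φ ψ β hφψ,
    map_interleaving_triangle hT_unit hT_ε hT_tensor hT_δ hT'_unit hT'_ε hT'_tensor hT'_δ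
      hH_unit hH_tensor hK hK_map ψ φ α hψφ⟩

end Transport

theorem stmt_10_general {G : Type*} [Category G] [MonoidalCategory G]
    {G' : Type*} [Category G'] [MonoidalCategory G']
    {X : Type*} [Category X] {X' : Type*} [Category X']
    -- monoidal weights
    (W : G → ℝ≥0∞)
    (W' : G' → ℝ≥0∞)
    -- strict monoidal functors into the endofunctor categories
    (T : G ⥤ (X ⥤ X)) [T.Monoidal]
    (hT_unit : T.obj (𝟙_ G) = 𝟭 X)
    (hT_tensor : ∀ g h : G, T.obj (g ⊗ h) = T.obj g ⊗ T.obj h)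
    (hT_ε : ε T = eqToHom hT_unit.symm)
    (hT_μ : ∀ g h : G, μ T g h = eqToHom (hT_tensor g h).symm)
    (T' : G' ⥤ (X' ⥤ X')) [T'.Monoidal]
    (hT'_unit : T'.obj (𝟙_ G') = 𝟭 X')
    (hT'_tensor : ∀ g h : G', T'.obj (g ⊗ h) = T'.obj g ⊗ T'.obj h)
    (hT'_ε : ε T' = eqToHom hT'_unit.symm)
    (hT'_μ : ∀ g h : G', μ T' g h = eqToHom (hT'_tensor g h).symm)
    -- a strict monoidal functor `H : G ⥤ G'` which does not increase weights
    (H : G ⥤ G')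
    (hH_unit : H.obj (𝟙_ G) = 𝟙_ G')
    (hH_tensor : ∀ g h : G, H.obj (g ⊗ h) = H.obj g ⊗ H.obj h)
    (hH_lip : ∀ g : G, W' (H.obj g) ≤ W g)
    -- an equivariant functor `K : X ⥤ X'`
    (K : X ⥤ X')
    (hK : ∀ g : G, T.obj g ⋙ K = K ⋙ T'.obj (H.obj g))
    (hK_map : ∀ {g h : G} (α : g ⟶ h) (X₀ : X),
      K.map ((T.map α).app X₀) =
        eqToHom (Functor.congr_obj (hK g) X₀) ≫ (T'.map (H.map α)).app (K.obj X₀) ≫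
          eqToHom (Functor.congr_obj (hK h) X₀).symm) :
    ∀ X₀ Y₀ : X,
      interleavingDist T' W' (K.obj X₀) (K.obj Y₀) ≤ interleavingDist T W X₀ Y₀ := by
  intro X₀ Y₀
  have hT_δ g h := Functor.Monoidal.δ_eq_eqToHom_of_μ_eq_eqToHom T (hT_tensor g h) (hT_μ g h)
  have hT'_δ g h := Functor.Monoidal.δ_eq_eqToHom_of_μ_eq_eqToHom T' (hT'_tensor g h) (hT'_μ g h)
  exact interleavingDist_le_of_forall_interleaved H.obj hH_lip fun g h hint =>
    hint.map hT_unit hT_ε hT_tensor hT_δ hT'_unit hT'_ε hT'_tensor hT'_δ hH_unit hH_tensor hK hK_map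

/-- **stability for monoidal functor interleavings.** Let `T`, `T'` be strict
monoidal functors into endofunctor categories, with monoidal weights `W`, `W'`.  An equivariant
Lipschitz pair `(H, K)` — a strict monoidal functor `H : G ⥤ G'` which does not increase
weights, and a functor `K : X ⥤ X'` intertwining the actions on objects and on the natural
transformations `T.map α` — induces a `1`-Lipschitz map for the interleaving distances. -/
theorem stmt_10 {G : Type*} [Category G] [MonoidalCategory G]
    {G' : Type*} [Category G'] [MonoidalCategory G']
    {X : Type*} [Category X] {X' : Type*} [Category X']
    -- monoidal weights
    (W : G → ℝ≥0∞) (hW_unit : W (𝟙_ G) = 0) (hW_tensor : ∀ g h : G, W (g ⊗ h) ≤ W g + W h)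
    (W' : G' → ℝ≥0∞) (hW'_unit : W' (𝟙_ G') = 0)
    (hW'_tensor : ∀ g h : G', W' (g ⊗ h) ≤ W' g + W' h)
    -- strict monoidal functors into the endofunctor categories
    (T : G ⥤ (X ⥤ X)) [T.Monoidal]
    (hT_unit : T.obj (𝟙_ G) = 𝟭 X)
    (hT_tensor : ∀ g h : G, T.obj (g ⊗ h) = T.obj g ⊗ T.obj h)
    (hT_ε : ε T = eqToHom hT_unit.symm)
    (hT_μ : ∀ g h : G, μ T g h = eqToHom (hT_tensor g h).symm)
    (T' : G' ⥤ (X' ⥤ X')) [T'.Monoidal]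
    (hT'_unit : T'.obj (𝟙_ G') = 𝟭 X')
    (hT'_tensor : ∀ g h : G', T'.obj (g ⊗ h) = T'.obj g ⊗ T'.obj h)
    (hT'_ε : ε T' = eqToHom hT'_unit.symm)
    (hT'_μ : ∀ g h : G', μ T' g h = eqToHom (hT'_tensor g h).symm)
    -- a strict monoidal functor `H : G ⥤ G'` which does not increase weights
    (H : G ⥤ G') [H.Monoidal]
    (hH_unit : H.obj (𝟙_ G) = 𝟙_ G')
    (hH_tensor : ∀ g h : G, H.obj (g ⊗ h) = H.obj g ⊗ H.obj h)
    (hH_ε : ε H = eqToHom hH_unit.symm)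
    (hH_μ : ∀ g h : G, μ H g h = eqToHom (hH_tensor g h).symm)
    (hH_lip : ∀ g : G, W' (H.obj g) ≤ W g)
    -- an equivariant functor `K : X ⥤ X'`
    (K : X ⥤ X')
    (hK : ∀ g : G, T.obj g ⋙ K = K ⋙ T'.obj (H.obj g))
    (hK_map : ∀ {g h : G} (α : g ⟶ h) (X₀ : X),
      K.map ((T.map α).app X₀) =
        eqToHom (Functor.congr_obj (hK g) X₀) ≫ (T'.map (H.map α)).app (K.obj X₀) ≫
          eqToHom (Functor.congr_obj (hK h) X₀).symm) :
    ∀ X₀ Y₀ : X,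
      interleavingDist T' W' (K.obj X₀) (K.obj Y₀) ≤ interleavingDist T W X₀ Y₀ :=
  stmt_10_general W W' T hT_unit hT_tensor hT_ε hT_μ T' hT'_unit hT'_tensor hT'_ε hT'_μ H hH_unit
    hH_tensor hH_lip K hK hK_map
end

section
/- Let X be a topological space, let φ, ψ : X → ℝ be functions, and let t ≥ 0 be a real number with |φ(x) − ψ(x)| ≤ t for all x ∈ X. Let S(φ) : ℝ ⥤ Top denote the sublevel set filtration of φ, sending r to the subspace {x ∈ X : φ(x) ≤ r} (with the subspace topology) and r ≤ s to the inclusion map, and similarly S(ψ). Then for every category C and every functor H : Top ⥤ C, the generalized persistence modules H ∘ S(φ) and H ∘ S(ψ) : ℝ ⥤ C are t-interleaved in the standard sense. -/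
open CategoryTheory
open scoped ENNReal

section Interleaving

variable {C : Type*} [Category C]

/-- A `t`-interleaving (`t ≥ 0`) between generalized persistence modules `M N : ℝ ⥤ C`:
families of morphisms `φ_s : M s ⟶ N (s + t)` and `ψ_s : N s ⟶ M (s + t)` commuting with the
structure maps, whose composites are the structure maps `M (s ≤ s + 2t)`, `N (s ≤ s + 2t)`. -/
def IsInterleaving (M N : ℝ ⥤ C) (t : ℝ) (_ht : 0 ≤ t) : Prop :=
  ∃ (φ : ∀ s : ℝ, M.obj s ⟶ N.obj (s + t)) (ψ : ∀ s : ℝ, N.obj s ⟶ M.obj (s + t)),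
    (∀ (r s : ℝ) (h : r ≤ s),
      φ r ≫ N.map (homOfLE (by linarith : r + t ≤ s + t)) = M.map (homOfLE h) ≫ φ s) ∧
    (∀ (r s : ℝ) (h : r ≤ s),
      ψ r ≫ M.map (homOfLE (by linarith : r + t ≤ s + t)) = N.map (homOfLE h) ≫ ψ s) ∧
    (∀ s : ℝ, φ s ≫ ψ (s + t) = M.map (homOfLE (by linarith : s ≤ s + t + t))) ∧
    (∀ s : ℝ, ψ s ≫ φ (s + t) = N.map (homOfLE (by linarith : s ≤ s + t + t)))

end Interleaving

/-- The sublevel set filtration of a function `φ : X → ℝ` on a topological space `X`: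
the functor `ℝ ⥤ Top` sending `r` to the subspace `{x : X | φ x ≤ r}` and `r ≤ s` to the
inclusion map. -/
def sublevelFiltration (X : Type) [TopologicalSpace X] (φ : X → ℝ) : ℝ ⥤ TopCat where
  obj r := TopCat.of {x : X // φ x ≤ r}
  map {r s} f :=
    TopCat.ofHom ⟨fun x => ⟨x.1, x.2.trans (leOfHom f)⟩,
      Continuous.subtype_mk continuous_subtype_val _⟩
  map_id _ := rfl
  map_comp _ _ := rfl

/-- If `|φ x − ψ x| ≤ t` for all `x`, then for every functor `H : Top ⥤ C`
the generalized persistence modules `H ∘ S(φ)` and `H ∘ S(ψ)` obtained from the sublevel set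
filtrations of `φ` and `ψ` are `t`-interleaved. -/
theorem stmt_14 {X : Type} [TopologicalSpace X] (φ ψ : X → ℝ) (t : ℝ) (ht : 0 ≤ t)
    (hφψ : ∀ x : X, |φ x - ψ x| ≤ t) {C : Type*} [Category C] (H : TopCat ⥤ C) :
    IsInterleaving (sublevelFiltration X φ ⋙ H) (sublevelFiltration X ψ ⋙ H) t ht := by
  have hψφ : ∀ x : X, ψ x ≤ φ x + t := fun x => by
    have := abs_le.mp (hφψ x); linarith [this.1]
  have hφψ' : ∀ x : X, φ x ≤ ψ x + t := fun x => by
    have := abs_le.mp (hφψ x); linarith [(abs_le.mp (hφψ x)).2]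
  let F : ∀ s : ℝ, (sublevelFiltration X φ).obj s ⟶ (sublevelFiltration X ψ).obj (s + t) :=
    fun s => TopCat.ofHom ⟨fun x => ⟨x.1, by have h1 := x.2; have h2 := hψφ x.1; linarith⟩,
      by fun_prop⟩
  let G : ∀ s : ℝ, (sublevelFiltration X ψ).obj s ⟶ (sublevelFiltration X φ).obj (s + t) :=
    fun s => TopCat.ofHom ⟨fun x => ⟨x.1, by have h1 := x.2; have h2 := hφψ' x.1; linarith⟩,
      by fun_prop⟩
  refine ⟨fun s => H.map (F s), fun s => H.map (G s), ?_, ?_, ?_, ?_⟩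
  · intro r s h
    show H.map (F r) ≫ H.map _ = H.map _ ≫ H.map (F s)
    rw [← H.map_comp, ← H.map_comp]; rfl
  · intro r s h
    show H.map (G r) ≫ H.map _ = H.map _ ≫ H.map (G s)
    rw [← H.map_comp, ← H.map_comp]; rfl
  · intro s
    show H.map (F s) ≫ H.map (G (s + t)) = H.map _
    rw [← H.map_comp]; rfl
  · intro s
    show H.map (G s) ≫ H.map (F (s + t)) = H.map _
    rw [← H.map_comp]; rfl
end

section
/- Let X be a type and φ, ψ : X → ℝ functions. Then, in ℝ≥0∞: sInf { ENNReal.ofReal (max |s| |t|) : (s,t) ∈ ℝ × ℝ, 0 ≤ s + t, (∀ x, φ(x) ≤ ψ(x) + s), and (∀ x, ψ(x) ≤ φ(x) + t) } = ⨆_{x ∈ X} ENNReal.ofReal |φ(x) − ψ(x)|. -/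
/-!
Any admissible pair `(s, t)` bounds `φ x - ψ x` by `s` and `ψ x - φ x` by `t`, hence
`|φ x - ψ x|` by `max |s| |t|`. Conversely, when the sup-norm distance `M` is finite,
the pair `(M, M)` is admissible and has weight exactly `M`, so the infimum is attained.
-/

open scoped ENNReal

theorem abs_sub_le_max_abs_of_le_add {a b s t : ℝ} (hs : a ≤ b + s) (ht : b ≤ a + t) :
    |a - b| ≤ max |s| |t| :=
  abs_sub_le_iff.mpr
    ⟨by linarith [le_abs_self s, le_max_left |s| |t|],
      by linarith [le_abs_self t, le_max_right |s| |t|]⟩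

theorem le_toReal_iSup_ofReal {X : Type*} {f : X → ℝ} (h : ⨆ x, ENNReal.ofReal (f x) ≠ ∞)
    (x : X) : f x ≤ (⨆ x, ENNReal.ofReal (f x)).toReal :=
  (ENNReal.ofReal_le_iff_le_toReal h).mp (le_iSup (fun x ↦ ENNReal.ofReal (f x)) x)

/-- The interleaving distance on real-valued functions on `X` induced by the
translation action of `ℝ` on the poset `ℝ` (with weight `|t|`) equals the sup-norm distance. -/
theorem stmt_15 {X : Type*} (φ ψ : X → ℝ) :
    sInf {e : ℝ≥0∞ | ∃ s t : ℝ, 0 ≤ s + t ∧ (∀ x, φ x ≤ ψ x + s) ∧ (∀ x, ψ x ≤ φ x + t) ∧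
        e = ENNReal.ofReal (max |s| |t|)} =
      ⨆ x : X, ENNReal.ofReal |φ x - ψ x| := by
  set M := ⨆ x : X, ENNReal.ofReal |φ x - ψ x|
  refine le_antisymm ?_ (le_sInf ?_)
  · rcases eq_or_ne M ∞ with hM | hM
    · exact hM ▸ le_top
    have hbound := le_toReal_iSup_ofReal hM
    refine sInf_le ⟨M.toReal, M.toReal, by positivity, fun x ↦ ?_, fun x ↦ ?_, ?_⟩
    · linarith [le_abs_self (φ x - ψ x), hbound x]
    · linarith [neg_abs_le (φ x - ψ x), hbound x]
    · rw [max_self, abs_of_nonneg ENNReal.toReal_nonneg, ENNReal.ofReal_toReal hM]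
  · rintro e ⟨s, t, -, hs, ht, rfl⟩
    exact iSup_le fun x ↦ ENNReal.ofReal_le_ofReal (abs_sub_le_max_abs_of_le_add (hs x) (ht x))
end

section
/- Let G be a monoidal category, X a category, and T : G ⥤ (X ⥤ X) a monoidal functor into the monoidal category of endofunctors of X (tensor = composition). If objects X₀ and Y₀ of X are (g,h)-interleaved and objects Y₀ and Z₀ are (k,ℓ)-interleaved, then X₀ and Z₀ are (g ⊗ k, ℓ ⊗ h)-interleaved. -/
open CategoryTheory MonoidalCategory Functor.LaxMonoidal Functor.OplaxMonoidal
open scoped ENNReal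

attribute [local instance] CategoryTheory.endofunctorMonoidalCategory

section Defs

variable {G : Type*} [Category G] [MonoidalCategory G]
variable {X : Type*} [Category X]

/-- The key triangle computation for composing interleavings. -/
theorem interleaved_key (T : G ⥤ (X ⥤ X)) [T.Monoidal] (g h k ℓ : G) (X₀ Y₀ Z₀ : X)
    (φ₁ : X₀ ⟶ (T.obj g).obj Y₀) (ψ₁ : Y₀ ⟶ (T.obj h).obj X₀)
    (φ₂ : Y₀ ⟶ (T.obj k).obj Z₀) (ψ₂ : Z₀ ⟶ (T.obj ℓ).obj Y₀)
    (β₁ : 𝟙_ G ⟶ h ⊗ g) (β₂ : 𝟙_ G ⟶ ℓ ⊗ k)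
    (e₁ : φ₁ ≫ (T.obj g).map ψ₁ = (ε T).app X₀ ≫ (T.map β₁).app X₀ ≫ (δ T h g).app X₀)
    (e₃ : φ₂ ≫ (T.obj k).map ψ₂ = (ε T).app Y₀ ≫ (T.map β₂).app Y₀ ≫ (δ T ℓ k).app Y₀) :
    (φ₁ ≫ (T.obj g).map φ₂ ≫ (μ T k g).app Z₀) ≫
      (T.obj (k ⊗ g)).map (ψ₂ ≫ (T.obj ℓ).map ψ₁ ≫ (μ T h ℓ).app X₀) =
    (ε T).app X₀ ≫ (T.map (β₁ ≫ h ◁ ((λ_ g).inv ≫ β₂ ▷ g) ≫ (α_ h (ℓ ⊗ k) g).inv ≫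
        (α_ h ℓ k).inv ▷ g ≫ (α_ (h ⊗ ℓ) k g).hom)).app X₀ ≫
      (δ T (h ⊗ ℓ) (k ⊗ g)).app X₀ := by
  simp only [Functor.map_comp, Category.assoc]
  rw [← μ_naturality_assoc, ← μ_naturality_assoc, ← μ_naturality]
  rw [← Functor.map_comp_assoc, e₃]
  simp only [Functor.map_comp, Category.assoc]
  simp
  rw [← NatTrans.naturality_assoc, ← NatTrans.naturality_assoc, ← NatTrans.naturality_assoc,
    reassoc_of% e₁]
  simp

end Defs

/-- If `X₀, Y₀` are `(g,h)`-interleaved and `Y₀, Z₀` are `(k,ℓ)`-interleaved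
with respect to a monoidal functor `T : G ⥤ (X ⥤ X)`, then `X₀, Z₀` are interleaved with
respect to the composite pair.  (In the paper's convention, where `T_{g ⊗ h} = T_g ∘ T_h`, the
pair is `(g ⊗ k, ℓ ⊗ h)`; in Mathlib's mirror-image convention `F ⊗ G = F ⋙ G` on endofunctors
this pair reads `(k ⊗ g, h ⊗ ℓ)`.) -/
theorem stmt_16 {G : Type*} [Category G] [MonoidalCategory G] {X : Type*} [Category X]
    (T : G ⥤ (X ⥤ X)) [T.Monoidal] (g h k ℓ : G) (X₀ Y₀ Z₀ : X)
    (h₁ : Interleaved T g h X₀ Y₀) (h₂ : Interleaved T k ℓ Y₀ Z₀) :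
    Interleaved T (k ⊗ g) (h ⊗ ℓ) X₀ Z₀ := by
  obtain ⟨φ₁, ψ₁, α₁, β₁, e₁, e₂⟩ := h₁
  obtain ⟨φ₂, ψ₂, α₂, β₂, e₃, e₄⟩ := h₂
  exact ⟨φ₁ ≫ (T.obj g).map φ₂ ≫ (μ T k g).app Z₀,
    ψ₂ ≫ (T.obj ℓ).map ψ₁ ≫ (μ T h ℓ).app X₀,
    α₂ ≫ k ◁ ((λ_ ℓ).inv ≫ α₁ ▷ ℓ) ≫ (α_ k (g ⊗ h) ℓ).inv ≫
      (α_ k g h).inv ▷ ℓ ≫ (α_ (k ⊗ g) h ℓ).hom,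
    β₁ ≫ h ◁ ((λ_ g).inv ≫ β₂ ▷ g) ≫ (α_ h (ℓ ⊗ k) g).inv ≫
      (α_ h ℓ k).inv ▷ g ≫ (α_ (h ⊗ ℓ) k g).hom,
    interleaved_key T g h k ℓ X₀ Y₀ Z₀ φ₁ ψ₁ φ₂ ψ₂ β₁ β₂ e₁ e₃,
    interleaved_key T ℓ k h g Z₀ Y₀ X₀ ψ₂ φ₂ ψ₁ φ₁ α₂ α₁ e₄ e₂⟩
end
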